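/- arXiv:2103.13675 — 3 statements merged into one kernel-verified Lean document; each statement's English description precedes it below -/
import Mathlib

section
/- Let 0 < b < b̄ and let O = {(R,Z) ∈ ℝ² : R > 0 and bR < Z < b̄R}. Suppose P : O → ℝ is continuously differentiable, and define H(R,Z) = R ∫₁^R P(s, sZ/R) s⁻² ds for (R,Z) ∈ O. Then H is continuously differentiable on O and satisfies the Euler-type identity R·∂_R H(R,Z) + Z·∂_Z H(R,Z) − H(R,Z) = P(R,Z) for every (R,Z) ∈ O. -/
/-!
Substituting `u = Z / R` gives `H(R, Z) = R · G(R, Z / R)` with `G(x, u) = ∫₁ˣ P(s, s u) / s² ds`,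
a primitive with parameter of a `C¹` function on the product `(0, ∞) × (b, b̄)`. Such a primitive is
`C¹` because both partial derivatives exist and are continuous: `∂ₓG` by the fundamental theorem of
calculus, `∂ᵤG = ∫ ∂ᵤ(…)` by differentiation under the integral sign. Since the cone is invariant
under dilations, `t ↦ H(tR, tZ) = tR ∫₁^{tR} P(s, sZ/R) / s² ds`, and the Euler identity is the
derivative of this function at `t = 1`.
-/

open Set Filter Topology MeasureTheory
open scoped Interval

theorem IsCompact.exists_eventually_forall_norm_le {X Y G : Type*} [TopologicalSpace X]
    [TopologicalSpace Y] [NormedAddCommGroup G] {K : Set X} (hK : IsCompact K)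
    {k : X × Y → G} {y₀ : Y} (hk : ∀ x ∈ K, ContinuousAt k (x, y₀)) :
    ∃ M, ∀ᶠ y in 𝓝 y₀, ∀ x ∈ K, ‖k (x, y)‖ ≤ M := by
  obtain ⟨M, hM⟩ := hK.exists_bound_of_continuousOn (f := fun x => k (x, y₀)) fun x hx =>
    (ContinuousAt.comp (f := fun x' => (x', y₀)) (hk x hx) (by fun_prop)).continuousWithinAt
  refine ⟨M + 1, hK.eventually_forall_of_forall_eventually fun x hx => ?_⟩
  have hcont : ContinuousAt (fun z : Y × X => ‖k (z.2, z.1)‖) (y₀, x) :=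
    (ContinuousAt.comp (f := Prod.swap) (hk x hx) continuous_swap.continuousAt).norm
  exact hcont.eventually_le_const (by linarith [hM x hx])

theorem Set.OrdConnected.exists_Icc_subset_of_isOpen {I : Set ℝ} (hI : IsOpen I)
    (hI' : I.OrdConnected) {x y : ℝ} (hx : x ∈ I) (hy : y ∈ I) :
    ∃ c d, Icc c d ⊆ I ∧ x ∈ Ioo c d ∧ y ∈ Ioo c d := by
  obtain ⟨l, hl, hlI⟩ :=
    exists_Ioc_subset_of_mem_nhds (hI.mem_nhds (min_rec' (· ∈ I) hx hy)) (exists_lt _)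
  obtain ⟨u, hu, huI⟩ :=
    exists_Ico_subset_of_mem_nhds (hI.mem_nhds (max_rec' (· ∈ I) hx hy)) (exists_gt _)
  have := min_le_left x y; have := min_le_right x y
  have := le_max_left x y; have := le_max_right x y
  exact ⟨(l + min x y) / 2, (max x y + u) / 2,
    hI'.out (hlI ⟨by linarith, by linarith⟩) (huI ⟨by linarith, by linarith⟩),
    ⟨by linarith, by linarith⟩, by linarith, by linarith⟩

variable {G : Type*} [NormedAddCommGroup G] [NormedSpace ℝ G] {I : Set ℝ} {a x : ℝ}

theorem hasDerivAt_integral_of_continuousOn [CompleteSpace G] {φ : ℝ → G} (hI : IsOpen I)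
    (hI' : I.OrdConnected) (hφ : ContinuousOn φ I) (ha : a ∈ I) (hx : x ∈ I) :
    HasDerivAt (fun y => ∫ s in a..y, φ s) (φ x) x :=
  intervalIntegral.integral_hasDerivAt_right (hφ.mono (hI'.uIcc_subset ha hx)).intervalIntegrable
    (hφ.stronglyMeasurableAtFilter hI x hx) (hφ.continuousAt (hI.mem_nhds hx))

theorem continuousOn_parametric_primitive_of_continuousOn {X : Type*} [TopologicalSpace X]
    [FirstCountableTopology X] {J : Set X} {k : ℝ × X → G} (hI : IsOpen I)
    (hI' : I.OrdConnected) (hJ : IsOpen J) (ha : a ∈ I) (hk : ContinuousOn k (I ×ˢ J)) :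
    ContinuousOn (fun q : ℝ × X => ∫ s in a..q.1, k (s, q.2)) (I ×ˢ J) := by
  rintro ⟨x₀, u₀⟩ ⟨hx₀, hu₀⟩
  obtain ⟨c, d, hcd, hac, hx₀cd⟩ := hI'.exists_Icc_subset_of_isOpen hI ha hx₀
  have hsub : Ι c d ⊆ Icc c d := by
    rw [uIoc_of_le (hac.1.trans hac.2).le]
    exact Ioc_subset_Icc_self
  have hkc : ∀ t ∈ Icc c d, ContinuousAt k (t, u₀) := fun t ht =>
    hk.continuousAt ((hI.prod hJ).mem_nhds ⟨hcd ht, hu₀⟩)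
  obtain ⟨M, hM⟩ := isCompact_Icc.exists_eventually_forall_norm_le hkc
  classical
  -- `F` agrees with `k` near `u₀`; the `if` makes every slice measurable, as the lemma below needs
  let F : X → ℝ → G := fun u t => if u ∈ J then k (t, u) else 0
  have hF : ∀ u ∈ J, F u = fun t => k (t, u) := fun u hu => funext fun t => if_pos hu
  have hFJ : ∀ᶠ u in 𝓝 u₀, F u = fun t => k (t, u) := eventually_of_mem (hJ.mem_nhds hu₀) hF
  have hcont := intervalIntegral.continuousAt_parametric_primitive_of_dominated (F := F)
    (fun _ => M) c d (μ := volume) (x₀ := u₀) (fun u => ?_) ?_ intervalIntegrable_const ?_ hac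
    hx₀cd Real.volume_singleton
  · refine ((hcont.comp_of_eq (continuous_swap.continuousAt (x := (x₀, u₀))) rfl).congr
      ?_).continuousWithinAt
    filter_upwards [continuousAt_snd.eventually hFJ] with q hq
    simp [hq]
  · by_cases hu : u ∈ J
    · rw [hF u hu]
      exact ((hk.uncurry_right (f := fun t u => k (t, u)) u hu).mono
        (hsub.trans hcd)).aestronglyMeasurable measurableSet_uIoc
    · simp only [F, if_neg hu]
      exact aestronglyMeasurable_const
  · filter_upwards [hFJ, hM] with u hu hMu
    refine ae_restrict_of_forall_mem measurableSet_uIoc fun t ht => ?_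
    rw [hu]
    exact hMu t (hsub ht)
  · refine ae_restrict_of_forall_mem measurableSet_uIoc fun t ht => ?_
    exact (ContinuousAt.comp (f := fun u => (t, u)) (hkc t (hsub ht)) (by fun_prop)).congr
      (hFJ.mono fun u hu => (congrFun hu t).symm)

variable {E : Type*} [NormedAddCommGroup E] [NormedSpace ℝ E] {J : Set E}

theorem hasFDerivAt_integral_of_contDiffOn_prod {f : ℝ × E → G} (hI : IsOpen I)
    (hI' : I.OrdConnected) (hJ : IsOpen J) (hf : ContDiffOn ℝ 1 f (I ×ˢ J)) (ha : a ∈ I)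
    (hx : x ∈ I) {u₀ : E} (hu₀ : u₀ ∈ J) :
    HasFDerivAt (fun u => ∫ s in a..x, f (s, u))
      (∫ s in a..x, (fderiv ℝ f (s, u₀)).comp (ContinuousLinearMap.inr ℝ ℝ E)) u₀ := by
  have hU : IsOpen (I ×ˢ J) := hI.prod hJ
  have hax : Ι a x ⊆ I := uIoc_subset_uIcc.trans (hI'.uIcc_subset ha hx)
  set f₂ : ℝ × E → E →L[ℝ] G := fun q => (fderiv ℝ f q).comp (ContinuousLinearMap.inr ℝ ℝ E)
  have hf₂ : ContinuousOn f₂ (I ×ˢ J) :=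
    (hf.continuousOn_fderiv_of_isOpen hU le_rfl).clm_comp continuousOn_const
  obtain ⟨M, hM⟩ := isCompact_uIcc.exists_eventually_forall_norm_le fun t ht =>
    hf₂.continuousAt (hU.mem_nhds ⟨hI'.uIcc_subset ha hx ht, hu₀⟩)
  refine intervalIntegral.hasFDerivAt_integral_of_dominated_of_fderiv_le (bound := fun _ => M)
    (F' := fun u s => f₂ (s, u)) (inter_mem (hJ.mem_nhds hu₀) hM) ?_ ?_ ?_ ?_
    intervalIntegrable_const ?_
  · filter_upwards [hJ.mem_nhds hu₀] with u hu
    exact ((hf.continuousOn.uncurry_right (f := fun s u => f (s, u)) u hu).mono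
      hax).aestronglyMeasurable measurableSet_uIoc
  · exact ((hf.continuousOn.uncurry_right (f := fun s u => f (s, u)) u₀ hu₀).mono
      (hI'.uIcc_subset ha hx)).intervalIntegrable
  · exact ((hf₂.uncurry_right (f := fun s u => f₂ (s, u)) u₀ hu₀).mono
      hax).aestronglyMeasurable measurableSet_uIoc
  · exact ae_of_all _ fun t ht u hu => hu.2 t (uIoc_subset_uIcc ht)
  · refine ae_of_all _ fun t ht u hu => ?_
    have hfd := (hf.differentiableOn one_ne_zero (t, u) ⟨hax ht, hu.1⟩).differentiableAt
      (hU.mem_nhds ⟨hax ht, hu.1⟩)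
    exact hfd.hasFDerivAt.comp u (hasFDerivAt_prodMk_right t u)

theorem contDiffOn_parametric_primitive_of_contDiffOn [CompleteSpace G] {f : ℝ × E → G}
    (hI : IsOpen I) (hI' : I.OrdConnected) (hJ : IsOpen J) (ha : a ∈ I)
    (hf : ContDiffOn ℝ 1 f (I ×ˢ J)) :
    ContDiffOn ℝ 1 (fun q : ℝ × E => ∫ s in a..q.1, f (s, q.2)) (I ×ˢ J) := by
  have hU : IsOpen (I ×ˢ J) := hI.prod hJ
  set f₁ : ℝ → E → ℝ →L[ℝ] G := fun x u => (1 : ℝ →L[ℝ] ℝ).smulRight (f (x, u))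
  set f₂ : ℝ → E → E →L[ℝ] G := fun x u =>
    ∫ s in a..x, (fderiv ℝ f (s, u)).comp (ContinuousLinearMap.inr ℝ ℝ E)
  have hf₁ : ContinuousOn ↿f₁ (I ×ˢ J) :=
    (ContinuousLinearMap.smulRightL ℝ ℝ G 1).continuous.comp_continuousOn hf.continuousOn
  have hf₂ : ContinuousOn ↿f₂ (I ×ˢ J) :=
    continuousOn_parametric_primitive_of_continuousOn
      (k := fun p => (fderiv ℝ f p).comp (ContinuousLinearMap.inr ℝ ℝ E)) hI hI' hJ ha
      ((hf.continuousOn_fderiv_of_isOpen hU le_rfl).clm_comp continuousOn_const)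
  have hderiv : ∀ q ∈ I ×ˢ J, HasFDerivAt (fun q : ℝ × E => ∫ s in a..q.1, f (s, q.2))
      ((↿f₁ q).coprod (↿f₂ q)) q := fun q hq =>
    (hasStrictFDerivAt_uncurry_coprod (f := fun x u => ∫ s in a..x, f (s, u))
      (eventually_of_mem (hU.mem_nhds hq) fun v hv => (hasDerivAt_integral_of_continuousOn hI hI'
        (hf.continuousOn.uncurry_right (f := fun s u => f (s, u)) v.2 hv.2) ha hv.1).hasFDerivAt)
      (eventually_of_mem (hU.mem_nhds hq) fun v hv =>
        hasFDerivAt_integral_of_contDiffOn_prod hI hI' hJ hf ha hv.1 hv.2)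
      (hf₁.continuousAt (hU.mem_nhds hq)) (hf₂.continuousAt (hU.mem_nhds hq))).hasFDerivAt
  rw [show (1 : WithTop ℕ∞) = 0 + 1 from rfl, contDiffOn_succ_iff_fderiv_of_isOpen hU]
  refine ⟨fun q hq => (hderiv q hq).differentiableAt.differentiableWithinAt, by simp, ?_⟩
  rw [contDiffOn_zero]
  exact ((ContinuousLinearMap.coprodEquivL ℝ).continuous.comp_continuousOn
    (hf₁.prodMk hf₂)).congr fun q hq => (hderiv q hq).fderiv

def coneSector (b bbar : ℝ) : Set (ℝ × ℝ) := {p | 0 < p.1 ∧ b * p.1 < p.2 ∧ p.2 < bbar * p.1}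

noncomputable def helmholtz (P : ℝ × ℝ → ℝ) (p : ℝ × ℝ) : ℝ :=
  p.1 * ∫ s in (1 : ℝ)..p.1, P (s, s * p.2 / p.1) / s ^ 2

section Cone

variable {b bbar : ℝ} {p : ℝ × ℝ}

theorem mem_coneSector_iff : p ∈ coneSector b bbar ↔ 0 < p.1 ∧ p.2 / p.1 ∈ Ioo b bbar := by
  refine ⟨fun ⟨hR, hb, hbbar⟩ => ⟨hR, (lt_div_iff₀ hR).2 hb, (div_lt_iff₀ hR).2 hbbar⟩,
    fun ⟨hR, hb, hbbar⟩ => ⟨hR, (lt_div_iff₀ hR).1 hb, (div_lt_iff₀ hR).1 hbbar⟩⟩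

theorem isOpen_coneSector : IsOpen (coneSector b bbar) :=
  (isOpen_lt continuous_const continuous_fst).inter
    ((isOpen_lt (by fun_prop) continuous_snd).inter (isOpen_lt continuous_snd (by fun_prop)))

theorem mk_mul_div_mem_coneSector (hp : p ∈ coneSector b bbar) {s : ℝ} (hs : 0 < s) :
    (s, s * p.2 / p.1) ∈ coneSector b bbar := by
  rw [mem_coneSector_iff] at hp ⊢
  refine ⟨hs, ?_⟩
  rw [mul_div_assoc, mul_div_cancel_left₀ _ hs.ne']
  exact hp.2

end Cone

theorem helmholtz_eq (P : ℝ × ℝ → ℝ) :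
    helmholtz P = fun p => p.1 * ∫ s in (1 : ℝ)..p.1, P (s, s * (p.2 / p.1)) / s ^ 2 := by
  funext p
  simp only [helmholtz, mul_div_assoc]

theorem contDiffOn_helmholtz {b bbar : ℝ} {P : ℝ × ℝ → ℝ}
    (hP : ContDiffOn ℝ 1 P (coneSector b bbar)) :
    ContDiffOn ℝ 1 (helmholtz P) (coneSector b bbar) := by
  have hf : ContDiffOn ℝ 1 (fun q : ℝ × ℝ => P (q.1, q.1 * q.2) / q.1 ^ 2)
      (Ioi 0 ×ˢ Ioo b bbar) :=
    (hP.comp (by fun_prop) fun q hq => mem_coneSector_iff.2 ⟨hq.1, by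
      rw [mul_div_cancel_left₀ _ (ne_of_gt hq.1)]; exact hq.2⟩).div (by fun_prop)
      fun q hq => pow_ne_zero 2 (ne_of_gt hq.1)
  have hG := contDiffOn_parametric_primitive_of_contDiffOn isOpen_Ioi ordConnected_Ioi isOpen_Ioo
    (mem_Ioi.2 one_pos) hf
  rw [helmholtz_eq]
  exact contDiffOn_fst.mul (hG.comp (contDiffOn_fst.prodMk (contDiffOn_snd.div contDiffOn_fst
    fun p hp => ne_of_gt hp.1)) fun p hp => ⟨hp.1, (mem_coneSector_iff.1 hp).2⟩)

theorem fst_mul_fderiv_add_snd_mul_fderiv_of_hasDerivAt_smul {H : ℝ × ℝ → ℝ} {p : ℝ × ℝ}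
    {c : ℝ} (hH : DifferentiableAt ℝ H p) (hray : HasDerivAt (fun t : ℝ => H (t • p)) c 1) :
    p.1 * fderiv ℝ H p (1, 0) + p.2 * fderiv ℝ H p (0, 1) = c := by
  have hline : HasDerivAt (fun t : ℝ => t • p) p 1 := by
    simpa using (hasDerivAt_id (1 : ℝ)).smul_const p
  have hchain : HasDerivAt (fun t : ℝ => H (t • p)) (fderiv ℝ H p p) 1 :=
    hH.hasFDerivAt.comp_hasDerivAt_of_eq 1 hline (one_smul ℝ p).symm
  rw [← hchain.unique hray]
  generalize fderiv ℝ H p = L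
  conv_rhs => rw [show p = p.1 • ((1 : ℝ), (0 : ℝ)) + p.2 • ((0 : ℝ), (1 : ℝ)) by ext <;> simp]
  simp only [map_add, map_smul, smul_eq_mul]

theorem helmholtz_smul (P : ℝ × ℝ → ℝ) (p : ℝ × ℝ) {t : ℝ} (ht : t ≠ 0) :
    helmholtz P (t • p) = t * p.1 * ∫ s in (1 : ℝ)..t * p.1, P (s, s * p.2 / p.1) / s ^ 2 := by
  simp only [helmholtz, Prod.smul_fst, Prod.smul_snd, smul_eq_mul, mul_left_comm _ t,
    mul_div_mul_left _ _ ht]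

theorem hasDerivAt_helmholtz_smul {b bbar : ℝ} {P : ℝ × ℝ → ℝ} {p : ℝ × ℝ}
    (hP : ContinuousOn P (coneSector b bbar)) (hp : p ∈ coneSector b bbar) :
    HasDerivAt (fun t : ℝ => helmholtz P (t • p)) (helmholtz P p + P p) 1 := by
  set φ : ℝ → ℝ := fun s => P (s, s * p.2 / p.1) / s ^ 2
  have hφ : ContinuousOn φ (Ioi 0) :=
    (hP.comp (by fun_prop) fun s hs => mk_mul_div_mem_coneSector hp hs).div (by fun_prop)
      fun s hs => pow_ne_zero 2 (ne_of_gt hs)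
  have hΦ := hasDerivAt_integral_of_continuousOn isOpen_Ioi ordConnected_Ioi hφ
    (mem_Ioi.2 one_pos) (mem_Ioi.2 hp.1)
  have hlin : HasDerivAt (fun t : ℝ => t * p.1) p.1 1 := by
    simpa using (hasDerivAt_id (1 : ℝ)).mul_const p.1
  have hray := hlin.mul (hΦ.comp_of_eq 1 hlin (one_mul _).symm)
  have heq : (fun t => helmholtz P (t • p)) =ᶠ[𝓝 1]
      fun t => t * p.1 * ∫ s in (1 : ℝ)..t * p.1, φ s := by
    filter_upwards [eventually_gt_nhds one_pos] with t ht
    exact helmholtz_smul P p ht.ne'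
  refine (hray.congr_of_eventuallyEq heq).congr_deriv ?_
  have hR : p.1 ≠ 0 := ne_of_gt hp.1
  simp only [φ, Function.comp_apply, one_mul, helmholtz, mul_div_cancel_left₀ _ hR]
  congr 1
  field_simp

theorem stmt_0_general
    (b bbar : ℝ)
    (O : Set (ℝ × ℝ))
    (hO : O = {p : ℝ × ℝ | 0 < p.1 ∧ b * p.1 < p.2 ∧ p.2 < bbar * p.1})
    (P : ℝ × ℝ → ℝ) (hP : ContDiffOn ℝ 1 P O)
    (H : ℝ × ℝ → ℝ)
    (hH : ∀ p : ℝ × ℝ, p ∈ O →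
      H p = p.1 * ∫ s in (1:ℝ)..p.1, P (s, s * p.2 / p.1) / s ^ 2) :
    ContDiffOn ℝ 1 H O ∧
      ∀ p ∈ O,
        p.1 * fderiv ℝ H p (1, 0) + p.2 * fderiv ℝ H p (0, 1) - H p = P p := by
  obtain rfl : O = coneSector b bbar := hO
  have hHO : EqOn H (helmholtz P) (coneSector b bbar) := hH
  have hC1 := contDiffOn_helmholtz hP
  refine ⟨hC1.congr hHO, fun p hp => ?_⟩
  have hp_nhds := isOpen_coneSector.mem_nhds hp
  rw [(hHO.eventuallyEq_of_mem hp_nhds).fderiv_eq, hHO hp,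
    fst_mul_fderiv_add_snd_mul_fderiv_of_hasDerivAt_smul
      ((hC1.differentiableOn one_ne_zero p hp).differentiableAt hp_nhds)
      (hasDerivAt_helmholtz_smul hP.continuousOn hp)]
  ring

/-- For `0 < b < b̄`, on the open cone
`O = {(R,Z) | R > 0, bR < Z < b̄R}`, if `P` is `C¹` on `O` and
`H(R,Z) = R ∫₁^R P(s, sZ/R)/s² ds`, then `H` is `C¹` on `O` and satisfies
the Euler identity `R ∂_R H + Z ∂_Z H − H = P` on `O`. -/
theorem stmt_0
    (b bbar : ℝ) (hb : 0 < b) (hbbar : b < bbar)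
    (O : Set (ℝ × ℝ))
    (hO : O = {p : ℝ × ℝ | 0 < p.1 ∧ b * p.1 < p.2 ∧ p.2 < bbar * p.1})
    (P : ℝ × ℝ → ℝ) (hP : ContDiffOn ℝ 1 P O)
    (H : ℝ × ℝ → ℝ)
    (hH : ∀ p : ℝ × ℝ, p ∈ O →
      H p = p.1 * ∫ s in (1:ℝ)..p.1, P (s, s * p.2 / p.1) / s ^ 2) :
    ContDiffOn ℝ 1 H O ∧
      ∀ p ∈ O,
        p.1 * fderiv ℝ H p (1, 0) + p.2 * fderiv ℝ H p (0, 1) - H p = P p :=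
  stmt_0_general b bbar O hO P hP H hH
end

section
/- Assume the pressure hypotheses. Then there exist a constant c > 0 and nonnegative real numbers 𝔞₁, 𝔞₂, 𝔞₃ such that 0 ≤ P(R,Z) ≤ c·H(R,Z) + 𝔞₁·R + 𝔞₂·Z + 𝔞₃ for every (R,Z) ∈ O̅. -/
/-!
Nonnegativity: on the ray `s ↦ (s, sθ)` through a point of the cone, `H(s, sθ) = s·g(s)` with
`g(s) = ∫₁ˢ P(t, tθ) t⁻² dt`. This function of `s` is convex and tends to `0` as `s → 0⁺`
(because `P(0,0) = 0`), so its slope from the origin, `g`, is nondecreasing, and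
`g'(s) = P(s, sθ)/s² ≥ 0`.

Upper bound: the convex function `H - a̲P` has an affine minorant on the open cone `O`
(separate a point below its graph from its open strict epigraph), which is the bound on `O`.
It reaches a boundary point `p ≠ 0` by approaching `p` along a segment from inside `O`, on which
convexity of `H` bounds `H` by the chord.
-/

open Set Filter Topology

theorem ConvexOn.exists_affine_le_of_isOpen {E : Type*} [NormedAddCommGroup E] [NormedSpace ℝ E]
    {C : Set E} {f : E → ℝ} (hC : IsOpen C) (hfc : ContinuousOn f C) (hf : ConvexOn ℝ C f) :
    ∃ (l : StrongDual ℝ E) (c : ℝ), ∀ x ∈ C, l x + c ≤ f x := by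
  rcases C.eq_empty_or_nonempty with rfl | ⟨x₀, hx₀⟩
  · exact ⟨0, 0, by simp⟩
  set S : Set (E × ℝ) := {q | q.1 ∈ C ∧ f q.1 < q.2}
  have hS : IsOpen S := by
    have hS_eq : S = Prod.fst ⁻¹' C ∩ (fun q => f q.1 - q.2) ⁻¹' Iio 0 := by
      ext; simp [S, sub_neg]
    rw [hS_eq]
    exact ((hfc.comp continuous_fst.continuousOn fun _ hq => hq).sub
      continuous_snd.continuousOn).isOpen_inter_preimage (hC.preimage continuous_fst) isOpen_Iio
  obtain ⟨φ, hφ⟩ := geometric_hahn_banach_open_point hf.convex_strict_epigraph hS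
    (x := (x₀, f x₀)) (by simp)
  set L : StrongDual ℝ E := φ.comp (ContinuousLinearMap.inl ℝ E ℝ)
  set c := φ (0, 1)
  have hφ_apply (x : E) (t : ℝ) : φ (x, t) = L x + t * c := by
    have : (x, t) = ContinuousLinearMap.inl ℝ E ℝ x + t • ((0, 1) : E × ℝ) := by simp
    rw [this, map_add, map_smul, smul_eq_mul]
    rfl
  have hlt : ∀ x ∈ C, ∀ t, f x < t → L x + t * c < L x₀ + f x₀ * c := fun x hx t ht => by
    simpa [hφ_apply] using hφ (x, t) ⟨hx, ht⟩
  have hc : c < 0 := by linarith [hlt x₀ hx₀ (f x₀ + 1) (by linarith)]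
  have hle : ∀ x ∈ C, L x + f x * c ≤ L x₀ + f x₀ * c := fun x hx =>
    le_of_tendsto
      (((continuous_const.add (continuous_id.mul continuous_const)).tendsto (f x)).mono_left
        nhdsWithin_le_nhds)
      (eventually_nhdsWithin_of_forall (s := Ioi (f x)) fun t ht => (hlt x hx t ht).le)
  refine ⟨-c⁻¹ • L, (L x₀ + f x₀ * c) / c, fun x hx => ?_⟩
  rw [smul_apply, smul_eq_mul,
    show -c⁻¹ * L x + (L x₀ + f x₀ * c) / c = (L x₀ + f x₀ * c - L x) / c by ring,
    div_le_iff_of_neg hc]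
  linarith [hle x hx]

theorem ConvexOn.le_of_forall_openSegment_le {E : Type*} [NormedAddCommGroup E]
    [NormedSpace ℝ E] {s : Set E} {F u : E → ℝ} {x y : E} (hF : ConvexOn ℝ s F) (hx : x ∈ s)
    (hy : y ∈ s) (hu : ContinuousWithinAt u (segment ℝ x y) x)
    (h : ∀ z ∈ openSegment ℝ x y, u z ≤ F z) : u x ≤ F x := by
  set γ : ℝ → E := fun t => (1 - t) • x + t • y
  have hγ : Tendsto γ (𝓝[>] 0) (𝓝[segment ℝ x y] x) := by
    refine tendsto_nhdsWithin_iff.mpr ⟨?_, ?_⟩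
    · have : Continuous γ := by fun_prop
      simpa [γ] using (this.tendsto 0).mono_left nhdsWithin_le_nhds
    · filter_upwards [Ioo_mem_nhdsGT one_pos] with t ht
      exact ⟨1 - t, t, by linarith [ht.2], ht.1.le, by ring, rfl⟩
  have hbound : Tendsto (fun t : ℝ => (1 - t) * F x + t * F y) (𝓝[>] 0) (𝓝 (F x)) := by
    have : Continuous (fun t : ℝ => (1 - t) * F x + t * F y) := by fun_prop
    simpa using (this.tendsto 0).mono_left nhdsWithin_le_nhds
  refine le_of_tendsto_of_tendsto (hu.tendsto.comp hγ) hbound ?_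
  filter_upwards [Ioo_mem_nhdsGT one_pos] with t ht
  calc u (γ t) ≤ F (γ t) := h _ ⟨1 - t, t, by linarith [ht.2], ht.1, by ring, rfl⟩
    _ ≤ (1 - t) * F x + t * F y := hF.2 hx hy (by linarith [ht.2]) ht.1.le (by ring)

theorem ContinuousLinearMap.apply_eq_fst_mul_add_snd_mul (l : ℝ × ℝ →L[ℝ] ℝ) (p : ℝ × ℝ) :
    l p = p.1 * l (1, 0) + p.2 * l (0, 1) := by
  rw [← smul_eq_mul, ← smul_eq_mul, ← map_smul, ← map_smul, ← map_add]
  simp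

theorem ConvexOn.monotoneOn_div_self_of_tendsto_zero {h : ℝ → ℝ} (hh : ConvexOn ℝ (Ioi 0) h)
    (h0 : Tendsto h (𝓝[>] 0) (𝓝 0)) : MonotoneOn (fun s => h s / s) (Ioi 0) := by
  intro s hs r hr hsr
  have hsecant {x : ℝ} (hx : 0 < x) :
      Tendsto (fun ε => (h x - h ε) / (x - ε)) (𝓝[>] 0) (𝓝 (h x / x)) := by
    have hden : Tendsto (fun ε : ℝ => x - ε) (𝓝[>] 0) (𝓝 x) :=
      ((continuous_const.sub continuous_id).tendsto' 0 x (sub_zero x)).mono_left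
        nhdsWithin_le_nhds
    have := (tendsto_const_nhds (x := h x)).sub h0 |>.div hden hx.ne'
    rwa [sub_zero] at this
  refine le_of_tendsto_of_tendsto (hsecant hs) (hsecant hr) ?_
  filter_upwards [Ioo_mem_nhdsGT hs] with ε hε
  exact hh.secant_mono hε.1 hs hr hε.2.ne' (hε.2.trans_le hsr).ne' hsr

theorem abs_integral_div_sq_le {f : ℝ → ℝ} {M s δ : ℝ} (hM : 0 ≤ M) (hs : 0 < s) (hsδ : s ≤ δ)
    (hf : ∀ t ∈ Ioc s δ, |f t| ≤ M) : |∫ t in s..δ, f t / t ^ 2| ≤ M / s := by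
  have hpos : ∀ t ∈ uIcc s δ, 0 < t := fun t ht => hs.trans_le (by simpa [hsδ] using ht.1)
  have hbound : IntervalIntegrable (fun t : ℝ => M * t ^ (-2 : ℤ)) MeasureTheory.volume s δ :=
    (continuousOn_const.mul (continuousOn_zpow₀ (G₀ := ℝ) (-2) |>.mono
      fun t ht => (hpos t ht).ne')).intervalIntegrable
  calc |∫ t in s..δ, f t / t ^ 2|
      = ‖∫ t in s..δ, f t / t ^ 2‖ := (Real.norm_eq_abs _).symm
    _ ≤ ∫ t in s..δ, M * t ^ (-2 : ℤ) := by
        refine intervalIntegral.norm_integral_le_of_norm_le hsδ (.of_forall fun t ht => ?_) hbound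
        rw [Real.norm_eq_abs, abs_div, abs_of_pos (pow_pos (hs.trans ht.1) 2), zpow_neg,
          div_eq_mul_inv]
        exact mul_le_mul_of_nonneg_right (hf t ht) (by positivity)
    _ = M * (s⁻¹ - δ⁻¹) := by
        rw [intervalIntegral.integral_const_mul, integral_zpow
          (.inr ⟨by norm_num, fun h0 => (hpos 0 h0).false⟩),
          show (-2 : ℤ) + 1 = -1 by norm_num, zpow_neg_one, zpow_neg_one]
        push_cast
        ring
    _ ≤ M / s := by
        rw [div_eq_mul_inv]
        exact mul_le_mul_of_nonneg_left (by linarith [inv_nonneg.mpr (hs.trans_le hsδ).le]) hM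

theorem intervalIntegrable_div_sq {f : ℝ → ℝ} (hf : ContinuousOn f (Ioi 0)) {a b : ℝ}
    (ha : 0 < a) (hb : 0 < b) :
    IntervalIntegrable (fun t => f t / t ^ 2) MeasureTheory.volume a b := by
  have hpos : uIcc a b ⊆ Ioi 0 := fun t ht => (lt_min ha hb).trans_le ht.1
  exact ((hf.mono hpos).div (continuous_pow 2).continuousOn
    fun t ht => pow_ne_zero 2 (hpos ht).ne').intervalIntegrable

theorem tendsto_mul_integral_div_sq {f : ℝ → ℝ} (hf : ContinuousOn f (Ici 0)) (hf0 : f 0 = 0) :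
    Tendsto (fun s => s * ∫ t in (1 : ℝ)..s, f t / t ^ 2) (𝓝[>] 0) (𝓝 0) := by
  rw [Metric.tendsto_nhds]
  intro η hη
  obtain ⟨δ, hδ, hfδ⟩ : ∃ δ > 0, ∀ t ∈ Ioc 0 δ, |f t| ≤ η / 2 := by
    have := (hf 0 self_mem_Ici).eventually (Metric.closedBall_mem_nhds (f 0) (half_pos hη))
    obtain ⟨δ, hδ, hball⟩ := Metric.mem_nhdsWithin_iff.mp this
    refine ⟨δ / 2, half_pos hδ, fun t ht => ?_⟩
    have := hball ⟨Metric.mem_ball.mpr ?_, mem_Ici.mpr ht.1.le⟩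
    · simpa [hf0, Real.dist_eq] using this
    · rw [Real.dist_eq, sub_zero, abs_of_pos ht.1]; linarith [ht.2]
  set C := ∫ t in (1 : ℝ)..δ, f t / t ^ 2
  have hC : Tendsto (fun s : ℝ => s * C) (𝓝[>] 0) (𝓝 0) :=
    ((continuous_id.mul continuous_const).tendsto' 0 0 (zero_mul C)).mono_left nhdsWithin_le_nhds
  filter_upwards [Ioo_mem_nhdsGT hδ, hC.eventually (Metric.ball_mem_nhds 0 (half_pos hη))]
    with s hs hsC
  have hfIoi : ContinuousOn f (Ioi 0) := hf.mono Ioi_subset_Ici_self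
  have hsplit : ∫ t in (1 : ℝ)..s, f t / t ^ 2 = C - ∫ t in s..δ, f t / t ^ 2 := by
    rw [← intervalIntegral.integral_add_adjacent_intervals
      (intervalIntegrable_div_sq hfIoi one_pos hδ) (intervalIntegrable_div_sq hfIoi hδ hs.1),
      intervalIntegral.integral_symm s δ]
    ring
  have htail : |s * ∫ t in s..δ, f t / t ^ 2| ≤ η / 2 := by
    rw [abs_mul, abs_of_pos hs.1, ← le_div_iff₀' hs.1]
    exact abs_integral_div_sq_le (half_pos hη).le hs.1 hs.2.le
      fun t ht => hfδ t ⟨hs.1.trans ht.1, ht.2⟩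
  rw [Real.dist_eq, sub_zero] at hsC ⊢
  rw [hsplit, mul_sub]
  linarith [abs_sub (s * C) (s * ∫ t in s..δ, f t / t ^ 2)]

theorem nonneg_of_convexOn_mul_integral_div_sq {f : ℝ → ℝ} (hf : ContinuousOn f (Ici 0))
    (hf0 : f 0 = 0) (hconv : ConvexOn ℝ (Ioi 0) fun s => s * ∫ t in (1 : ℝ)..s, f t / t ^ 2)
    {s : ℝ} (hs : 0 < s) : 0 ≤ f s := by
  set g : ℝ → ℝ := fun s => ∫ t in (1 : ℝ)..s, f t / t ^ 2
  have hmono : MonotoneOn g (Ioi 0) :=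
    (hconv.monotoneOn_div_self_of_tendsto_zero (tendsto_mul_integral_div_sq hf hf0)).congr
      fun s (hs : 0 < s) => mul_div_cancel_left₀ _ hs.ne'
  have hcont : ContinuousOn (fun t => f t / t ^ 2) (Ioi 0) :=
    (hf.mono Ioi_subset_Ici_self).div (continuous_pow 2).continuousOn
      fun t (ht : 0 < t) => pow_ne_zero 2 ht.ne'
  have hderiv : HasDerivAt g (f s / s ^ 2) s :=
    intervalIntegral.integral_hasDerivAt_right
      (intervalIntegrable_div_sq (hf.mono Ioi_subset_Ici_self) one_pos hs)
      (hcont.stronglyMeasurableAtFilter isOpen_Ioi s hs) (hcont.continuousAt (Ioi_mem_nhds hs))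
  have := hmono.derivWithin_nonneg (x := s)
  rw [derivWithin_of_isOpen isOpen_Ioi hs, hderiv.deriv] at this
  simpa [hs.ne'] using mul_nonneg this (sq_nonneg s)

def openCone (b bbar : ℝ) : Set (ℝ × ℝ) := {p | 0 < p.1 ∧ b * p.1 < p.2 ∧ p.2 < bbar * p.1}

def closedCone (b bbar : ℝ) : Set (ℝ × ℝ) := {p | 0 ≤ p.1 ∧ b * p.1 ≤ p.2 ∧ p.2 ≤ bbar * p.1}

section Cone

variable {b bbar : ℝ}

theorem isOpen_openCone (b bbar : ℝ) : IsOpen (openCone b bbar) :=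
  (isOpen_lt continuous_const continuous_fst).inter
    ((isOpen_lt (continuous_const.mul continuous_fst) continuous_snd).inter
      (isOpen_lt continuous_snd (continuous_const.mul continuous_fst)))

theorem openCone_subset_closedCone : openCone b bbar ⊆ closedCone b bbar :=
  fun _ ⟨h1, h2, h3⟩ => ⟨h1.le, h2.le, h3.le⟩

theorem mem_openCone_one_midpoint (h : b < bbar) : ((1 : ℝ), (b + bbar) / 2) ∈ openCone b bbar :=
  ⟨one_pos, by linarith, by linarith⟩

theorem convex_closedCone (b bbar : ℝ) : Convex ℝ (closedCone b bbar) := by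
  rintro p ⟨hp1, hp2, hp3⟩ q ⟨hq1, hq2, hq3⟩ s t hs ht -
  refine ⟨?_, ?_, ?_⟩ <;>
    simp only [Prod.fst_add, Prod.snd_add, Prod.smul_fst, Prod.smul_snd, smul_eq_mul] <;>
    nlinarith [mul_nonneg hs hp1]

theorem smul_mem_closedCone {c : ℝ} (hc : 0 ≤ c) {p : ℝ × ℝ} (hp : p ∈ closedCone b bbar) :
    c • p ∈ closedCone b bbar := by
  obtain ⟨hp1, hp2, hp3⟩ := hp
  refine ⟨?_, ?_, ?_⟩ <;> simp only [Prod.smul_fst, Prod.smul_snd, smul_eq_mul] <;> nlinarith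

theorem eq_zero_of_mem_closedCone {p : ℝ × ℝ} (hp : p ∈ closedCone b bbar) (h : p.1 = 0) :
    p = (0, 0) := by
  obtain ⟨-, hp2, hp3⟩ := hp
  rw [h, mul_zero] at hp2 hp3
  exact Prod.ext h (le_antisymm hp3 hp2)

theorem snd_nonneg_of_mem_closedCone (hb : 0 ≤ b) {p : ℝ × ℝ} (hp : p ∈ closedCone b bbar) :
    0 ≤ p.2 :=
  (mul_nonneg hb hp.1).trans hp.2.1

theorem openSegment_subset_openCone {p q : ℝ × ℝ} (hp : p ∈ closedCone b bbar)
    (hq : q ∈ openCone b bbar) : openSegment ℝ p q ⊆ openCone b bbar := by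
  rintro - ⟨s, t, hs, ht, -, rfl⟩
  obtain ⟨hp1, hp2, hp3⟩ := hp
  obtain ⟨hq1, hq2, hq3⟩ := hq
  refine ⟨?_, ?_, ?_⟩ <;>
    simp only [Prod.fst_add, Prod.snd_add, Prod.smul_fst, Prod.smul_snd, smul_eq_mul] <;>
    nlinarith [mul_nonneg hs.le hp1]

end Cone

theorem nonneg_of_mem_closedCone {b bbar : ℝ} {P H : ℝ × ℝ → ℝ}
    (hPcont : ContinuousOn P (closedCone b bbar)) (hP0 : P (0, 0) = 0)
    (hHdef : ∀ p : ℝ × ℝ, 0 < p.1 →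
      H p = p.1 * ∫ s in (1:ℝ)..p.1, P (s, s * p.2 / p.1) / s ^ 2)
    (hHconv : ConvexOn ℝ (closedCone b bbar \ {(0, 0)}) H) {p : ℝ × ℝ}
    (hp : p ∈ closedCone b bbar) : 0 ≤ P p := by
  rcases hp.1.eq_or_lt with h | hR
  · rw [eq_zero_of_mem_closedCone hp h.symm, hP0]
  set v : ℝ × ℝ := p.1⁻¹ • p
  have hv : v ∈ closedCone b bbar := smul_mem_closedCone (inv_nonneg.mpr hR.le) hp
  have hv1 : v.1 = 1 := inv_mul_cancel₀ hR.ne'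
  set f : ℝ → ℝ := fun s => P (s • v)
  have hf : ContinuousOn f (Ici 0) :=
    hPcont.comp (continuous_id.smul continuous_const).continuousOn
      fun s hs => smul_mem_closedCone hs hv
  have hf0 : f 0 = 0 := by simp only [f, zero_smul]; exact hP0
  have hray : ∀ s ∈ Ioi (0 : ℝ), H (s • v) = s * ∫ t in (1 : ℝ)..s, f t / t ^ 2 := by
    intro s (hs : 0 < s)
    rw [hHdef _ (by simpa [hv1] using hs)]
    simp only [Prod.smul_fst, Prod.smul_snd, smul_eq_mul, hv1, mul_one, f]
    congr 1
    refine intervalIntegral.integral_congr fun t _ => ?_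
    rw [mul_div_assoc, mul_div_cancel_left₀ _ hs.ne']
    congr 2
    ext <;> simp [hv1]
  have hconv : ConvexOn ℝ (Ioi 0) fun s => s * ∫ t in (1 : ℝ)..s, f t / t ^ 2 :=
    ((hHconv.comp_linearMap (LinearMap.toSpanSingleton ℝ _ v)).subset
      (fun s (hs : 0 < s) => ⟨smul_mem_closedCone hs.le hv, by simp [Prod.ext_iff, hv1, hs.ne']⟩)
      (convex_Ioi 0)).congr hray
  simpa [f, v, smul_inv_smul₀ hR.ne'] using nonneg_of_convexOn_mul_integral_div_sq hf hf0 hconv hR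

theorem exists_upper_bound_on_openCone {b bbar : ℝ} (hb : 0 ≤ b) {P H : ℝ × ℝ → ℝ} {a : ℝ}
    (ha : 0 < a) (hconv : ConvexOn ℝ (openCone b bbar) fun p => H p - a * P p) :
    ∃ a1 a2 a3 : ℝ, 0 ≤ a1 ∧ 0 ≤ a2 ∧ 0 ≤ a3 ∧
      ∀ p ∈ openCone b bbar, P p ≤ 1 / a * H p + a1 * p.1 + a2 * p.2 + a3 := by
  obtain ⟨l, γ, hl⟩ := hconv.exists_affine_le_of_isOpen (isOpen_openCone b bbar)
    (hconv.continuousOn (isOpen_openCone b bbar))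
  refine ⟨|l (1, 0)| / a, |l (0, 1)| / a, |γ| / a, by positivity, by positivity, by positivity,
    fun p hp => ?_⟩
  have hp1 : 0 ≤ p.1 := hp.1.le
  have hp2 : 0 ≤ p.2 := snd_nonneg_of_mem_closedCone hb (openCone_subset_closedCone hp)
  have hlp := hl p hp
  rw [l.apply_eq_fst_mul_add_snd_mul] at hlp
  rw [show 1 / a * H p + |l (1, 0)| / a * p.1 + |l (0, 1)| / a * p.2 + |γ| / a
      = (H p + |l (1, 0)| * p.1 + |l (0, 1)| * p.2 + |γ|) / a by ring, le_div_iff₀ ha]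
  nlinarith [neg_abs_le (l (1, 0)), neg_abs_le (l (0, 1)), neg_abs_le γ]

theorem le_of_forall_openCone_le {b bbar : ℝ} (h : b < bbar) {u F : ℝ × ℝ → ℝ}
    (hu : ContinuousOn u (closedCone b bbar)) (hF : ConvexOn ℝ (closedCone b bbar \ {(0, 0)}) F)
    (hle : ∀ q ∈ openCone b bbar, u q ≤ F q) {p : ℝ × ℝ} (hp : p ∈ closedCone b bbar)
    (hp0 : p ≠ (0, 0)) : u p ≤ F p := by
  have hq := mem_openCone_one_midpoint h
  have hqc := openCone_subset_closedCone hq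
  exact hF.le_of_forall_openSegment_le ⟨hp, hp0⟩ ⟨hqc, by simp⟩
    ((hu p hp).mono ((convex_closedCone b bbar).segment_subset hp hqc))
    fun z hz => hle z (openSegment_subset_openCone hp hq hz)

theorem stmt_5_general
    (b bbar : ℝ) (hb : 0 < b) (hbbar : b < bbar)
    (O Obar : Set (ℝ × ℝ))
    (hO : O = {p : ℝ × ℝ | 0 < p.1 ∧ b * p.1 < p.2 ∧ p.2 < bbar * p.1})
    (hObar : Obar = {p : ℝ × ℝ | 0 ≤ p.1 ∧ b * p.1 ≤ p.2 ∧ p.2 ≤ bbar * p.1})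
    (P H : ℝ × ℝ → ℝ)
    (hPcont : ContinuousOn P Obar) (hP0 : P (0, 0) = 0)
    (hHdef : ∀ p : ℝ × ℝ, 0 < p.1 →
      H p = p.1 * ∫ s in (1:ℝ)..p.1, P (s, s * p.2 / p.1) / s ^ 2)
    (hH0 : H (0, 0) = 0)
    (hHconv : StrictConvexOn ℝ (Obar \ {(0, 0)}) H)
    (aunder : ℝ) (haunder : 0 < aunder)
    (hconv1 : ConvexOn ℝ O (fun p => H p - aunder * P p)) :
    ∃ c a1 a2 a3 : ℝ, 0 < c ∧ 0 ≤ a1 ∧ 0 ≤ a2 ∧ 0 ≤ a3 ∧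
      ∀ p ∈ Obar, 0 ≤ P p ∧ P p ≤ c * H p + a1 * p.1 + a2 * p.2 + a3 := by
  obtain rfl : O = openCone b bbar := hO
  obtain rfl : Obar = closedCone b bbar := hObar
  obtain ⟨a1, a2, a3, ha1, ha2, ha3, hupper⟩ :=
    exists_upper_bound_on_openCone hb.le haunder hconv1
  refine ⟨1 / aunder, a1, a2, a3, by positivity, ha1, ha2, ha3, fun p hp =>
    ⟨nonneg_of_mem_closedCone hPcont hP0 hHdef hHconv.convexOn hp, ?_⟩⟩
  rcases eq_or_ne p (0, 0) with rfl | hp0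
  · simpa [hP0, hH0] using ha3
  have := le_of_forall_openCone_le hbbar (u := fun q => P q - (a1 * q.1 + a2 * q.2 + a3))
    (hPcont.sub (by fun_prop)) (hHconv.convexOn.smul (one_div_pos.mpr haunder).le)
    (fun q hq => by simp only [smul_eq_mul]; linarith [hupper q hq]) hp hp0
  simp only [smul_eq_mul] at this
  linarith

/-- Under the pressure hypotheses, there are `c > 0` and
nonnegative `𝔞₁, 𝔞₂, 𝔞₃` with `0 ≤ P(R,Z) ≤ c·H(R,Z) + 𝔞₁ R + 𝔞₂ Z + 𝔞₃`
for all `(R,Z) ∈ O̅`. -/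
theorem stmt_5
    (b bbar : ℝ) (hb : 0 < b) (hbbar : b < bbar)
    (O Obar : Set (ℝ × ℝ))
    (hO : O = {p : ℝ × ℝ | 0 < p.1 ∧ b * p.1 < p.2 ∧ p.2 < bbar * p.1})
    (hObar : Obar = {p : ℝ × ℝ | 0 ≤ p.1 ∧ b * p.1 ≤ p.2 ∧ p.2 ≤ bbar * p.1})
    (P H : ℝ × ℝ → ℝ)
    (hPcont : ContinuousOn P Obar) (hP0 : P (0, 0) = 0)
    (hPC1 : ContDiffOn ℝ 1 P (Obar \ {(0, 0)}))
    (hPC2 : ContDiffOn ℝ 2 P O)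
    (hHdef : ∀ p : ℝ × ℝ, 0 < p.1 →
      H p = p.1 * ∫ s in (1:ℝ)..p.1, P (s, s * p.2 / p.1) / s ^ 2)
    (hH0 : H (0, 0) = 0)
    (hHconv : StrictConvexOn ℝ (Obar \ {(0, 0)}) H)
    (aunder abar : ℝ) (haunder : 0 < aunder) (hab : aunder ≤ abar)
    (hconv1 : ConvexOn ℝ O (fun p => H p - aunder * P p))
    (hconv2 : ConvexOn ℝ O (fun p => abar * P p - H p)) :
    ∃ c a1 a2 a3 : ℝ, 0 < c ∧ 0 ≤ a1 ∧ 0 ≤ a2 ∧ 0 ≤ a3 ∧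
      ∀ p ∈ Obar, 0 ≤ P p ∧ P p ≤ c * H p + a1 * p.1 + a2 * p.2 + a3 :=
  stmt_5_general b bbar hb hbbar O Obar hO hObar P H hPcont hP0 hHdef hH0 hHconv aunder haunder
    hconv1
end

section
/- Let O ⊆ ℝ^d (d ≥ 1) be a Lebesgue measurable set of finite measure, and let (vₙ) be a sequence in L¹(O; ℝ^M) converging weakly in L¹ to v ∈ L¹(O; ℝ^M), i.e. ∫_O ⟨vₙ, g⟩ dx → ∫_O ⟨v, g⟩ dx for every bounded measurable g : O → ℝ^M. Let Φ : ℝ^M → (−∞, +∞] be lower semicontinuous and convex, and suppose each function x ↦ Φ(vₙ(x)) is integrable on O with supₙ ∫_O |Φ(vₙ(x))| dx < ∞. Then x ↦ Φ(v(x)) is integrable on O and ∫_O Φ(v(x)) dx ≤ liminf_{n→∞} ∫_O Φ(vₙ(x)) dx. -/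
/-!
A convex lower semicontinuous `Φ` that is finite somewhere is the supremum of countably many affine
minorants `ℓ k z = ⟪a k, z⟫ + c k` (Hahn–Banach in `E × ℝ`, then hereditary Lindelöf to pass to a
countable family). For each `K`, the maximum of `ℓ 0, …, ℓ K` evaluated along `vlim` is
`⟪vlim x, a (σ x)⟫ + c (σ x)` for a measurable selector `σ`; since `a ∘ σ` is bounded and
measurable, weak convergence turns `∫ ℓ (σ x) (v n x) ≤ ∫ φ n` into
`∫ max_{k ≤ K} ℓ k (vlim x) ≤ liminf ∫ φ n`. Monotone convergence in `K` concludes.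
-/

open MeasureTheory Filter Topology TopologicalSpace

lemma isClosed_realEpigraph {E : Type*} [TopologicalSpace E] {Φ : E → EReal}
    (hΦ : LowerSemicontinuous Φ) :
    IsClosed {p : E × ℝ | Φ p.1 ≤ p.2} :=
  hΦ.isClosed_epigraph.preimage
    (continuous_fst.prodMk (continuous_coe_real_ereal.comp continuous_snd))

section AffineMinorants

variable {E : Type*} [NormedAddCommGroup E] [NormedSpace ℝ E] {Φ : E → EReal}

lemma convex_realEpigraph
    (hΦ : ∀ y z : E, ∀ a c : ℝ, 0 ≤ a → 0 ≤ c →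
      a + c = 1 → Φ (a • y + c • z) ≤ (a : EReal) * Φ y + (c : EReal) * Φ z) :
    Convex ℝ {p : E × ℝ | Φ p.1 ≤ p.2} := by
  rintro ⟨y, s⟩ hys ⟨z, t⟩ hzt a c ha hc hac
  calc Φ (a • y + c • z) ≤ (a : EReal) * Φ y + (c : EReal) * Φ z := hΦ y z a c ha hc hac
    _ ≤ (a : EReal) * s + (c : EReal) * t := by gcongr <;> exact_mod_cast ‹_›
    _ = ((a * s + c * t : ℝ) : EReal) := by norm_cast

lemma EReal.coe_le_of_forall_le {x : ℝ} {e : EReal} (h : ∀ t : ℝ, e ≤ t → x ≤ t) :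
    (x : EReal) ≤ e :=
  EReal.le_of_forall_lt_iff_le.1 fun t ht => by exact_mod_cast h t ht.le

/-- The slope `r` is nonnegative because the epigraph is stable under increasing `t`. -/
lemma exists_separating_of_not_le
    (hlsc : LowerSemicontinuous Φ)
    (hconv : ∀ y z : E, ∀ a c : ℝ, 0 ≤ a → 0 ≤ c →
      a + c = 1 → Φ (a • y + c • z) ≤ (a : EReal) * Φ y + (c : EReal) * Φ z)
    {y₀ : E} {t₀ : ℝ} (h₀ : Φ y₀ ≤ t₀) {y : E} {s : ℝ} (hs : ¬ Φ y ≤ s) :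
    ∃ (g : StrongDual ℝ E) (r u : ℝ), 0 ≤ r ∧ g y + s * r < u ∧
      ∀ (z : E) (t : ℝ), Φ z ≤ t → u < g z + t * r := by
  obtain ⟨f, u, hfy, hf⟩ := geometric_hahn_banach_point_closed (convex_realEpigraph hconv)
    (isClosed_realEpigraph hlsc) (x := (y, s)) hs
  have hsplit : ∀ (z : E) (t : ℝ), f (z, t) = f.comp (.inl ℝ E ℝ) z + t * f (0, 1) := by
    intro z t
    rw [← smul_eq_mul, ← map_smul, ContinuousLinearMap.comp_apply, ← map_add]
    simp
  refine ⟨f.comp (.inl ℝ E ℝ), f (0, 1), u, ?_, hsplit y s ▸ hfy,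
    fun z t hzt => hsplit z t ▸ hf (z, t) hzt⟩
  by_contra! hr
  set r := f (0, 1)
  set g := f.comp (.inl ℝ E ℝ)
  have hgap : u < g y₀ + t₀ * r := hsplit y₀ t₀ ▸ hf _ h₀
  set t := t₀ + (g y₀ + t₀ * r - u) / -r
  have ht : Φ y₀ ≤ t := h₀.trans (by
    exact_mod_cast le_add_of_nonneg_right (div_nonneg (by linarith) (by linarith)))
  have hval : g y₀ + t * r = u := by
    simp only [t]; field_simp [hr.ne]; ring
  linarith [hsplit y₀ t ▸ hf (y₀, t) ht]

lemma exists_affine_minorant_of_separating {g : StrongDual ℝ E} {r u : ℝ} (hr : 0 < r)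
    {y : E} {s : ℝ} (hy : g y + s * r < u) (hg : ∀ (z : E) (t : ℝ), Φ z ≤ t → u < g z + t * r) :
    ∃ (l : StrongDual ℝ E) (c : ℝ), (∀ z, ((l z + c : ℝ) : EReal) ≤ Φ z) ∧ s < l y + c := by
  have hval : ∀ z, (-r⁻¹ • g) z + u / r = (u - g z) / r := fun z => by
    simp only [smul_apply, smul_eq_mul]; field_simp; ring
  refine ⟨-r⁻¹ • g, u / r, fun z => EReal.coe_le_of_forall_le fun t ht => ?_, ?_⟩
  · rw [hval, div_le_iff₀ hr]; linarith [hg z t ht]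
  · rw [hval, lt_div_iff₀ hr]; linarith

lemma exists_affine_minorant_gt
    (hlsc : LowerSemicontinuous Φ)
    (hconv : ∀ y z : E, ∀ a c : ℝ, 0 ≤ a → 0 ≤ c →
      a + c = 1 → Φ (a • y + c • z) ≤ (a : EReal) * Φ y + (c : EReal) * Φ z)
    {y₀ : E} {t₀ : ℝ} (h₀ : Φ y₀ = t₀) {y : E} {s : ℝ} (hs : s < Φ y) :
    ∃ (l : StrongDual ℝ E) (c : ℝ), (∀ z, ((l z + c : ℝ) : EReal) ≤ Φ z) ∧ s < l y + c := by
  have hbase : ∃ (l : StrongDual ℝ E) (c : ℝ), ∀ z, ((l z + c : ℝ) : EReal) ≤ Φ z := by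
    obtain ⟨g, r, u, hr, hy, hg⟩ :=
      exists_separating_of_not_le hlsc hconv h₀.le (s := t₀ - 1)
        (by rw [h₀, not_le]; exact_mod_cast sub_one_lt t₀)
    have hr : 0 < r := hr.lt_of_ne <| by
      rintro rfl; linarith [hg y₀ t₀ h₀.le]
    obtain ⟨l, c, hl, -⟩ := exists_affine_minorant_of_separating hr hy hg
    exact ⟨l, c, hl⟩
  obtain ⟨g, r, u, hr, hy, hg⟩ := exists_separating_of_not_le hlsc hconv h₀.le hs.not_ge
  obtain hr | rfl := hr.lt_or_eq
  · exact exists_affine_minorant_of_separating hr hy hg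
  -- a vertical hyperplane: tilt the base minorant by a large multiple of `u - g`
  obtain ⟨l₀, c₀, hl₀⟩ := hbase
  simp only [mul_zero, add_zero] at hy hg
  set m := (|s - (l₀ y + c₀)| + 1) / (u - g y)
  have hm : m * (u - g y) = |s - (l₀ y + c₀)| + 1 := div_mul_cancel₀ _ (by linarith)
  have hm0 : 0 ≤ m := div_nonneg (by positivity) (by linarith)
  have hval : ∀ z, (l₀ - m • g) z + (c₀ + m * u) = l₀ z + c₀ + m * (u - g z) := fun z => by
    simp only [sub_apply, smul_apply, smul_eq_mul]; ring
  refine ⟨l₀ - m • g, c₀ + m * u, fun z => EReal.coe_le_of_forall_le fun t ht => ?_, ?_⟩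
  · have : m * (u - g z) ≤ 0 := mul_nonpos_of_nonneg_of_nonpos hm0 (by linarith [hg z t ht])
    have : l₀ z + c₀ ≤ t := EReal.coe_le_coe_iff.1 ((hl₀ z).trans ht)
    rw [hval]; linarith
  · rw [hval, hm]; linarith [le_abs_self (s - (l₀ y + c₀))]

end AffineMinorants

open scoped InnerProductSpace in
theorem exists_seq_inner_add_minorant {E : Type*} [NormedAddCommGroup E] [InnerProductSpace ℝ E]
    [CompleteSpace E] [HereditarilyLindelofSpace E] {Φ : E → EReal}
    (hlsc : LowerSemicontinuous Φ)
    (hconv : ∀ y z : E, ∀ a c : ℝ, 0 ≤ a → 0 ≤ c →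
      a + c = 1 → Φ (a • y + c • z) ≤ (a : EReal) * Φ y + (c : EReal) * Φ z)
    {y₀ : E} {t₀ : ℝ} (h₀ : Φ y₀ = t₀) :
    ∃ (a : ℕ → E) (c : ℕ → ℝ), (∀ k z, ((⟪a k, z⟫_ℝ + c k : ℝ) : EReal) ≤ Φ z) ∧
      ∀ z, ⨆ k, ((⟪a k, z⟫_ℝ + c k : ℝ) : EReal) = Φ z := by
  set 𝓕 : Set (E → EReal) := {f | f ≤ Φ ∧ ∃ a c, f = fun z => ((⟪a, z⟫_ℝ + c : ℝ) : EReal)}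
  have hlub : IsLUB 𝓕 Φ := by
    refine isLUB_pi.2 fun y => ⟨?_, fun b hb => le_of_forall_lt fun e he => ?_⟩
    · rintro _ ⟨f, hf, rfl⟩; exact hf.1 y
    obtain ⟨s, hes, hs⟩ := EReal.lt_iff_exists_real_btwn.1 he
    obtain ⟨l, c, hl, hly⟩ := exists_affine_minorant_gt hlsc hconv h₀ hs
    set a := (InnerProductSpace.toDual ℝ E).symm l
    have hal : ∀ z, ⟪a, z⟫_ℝ = l z := fun z => InnerProductSpace.toDual_symm_apply
    refine hes.trans (lt_of_lt_of_le ?_ (hb ⟨_, ⟨fun z => ?_, a, c, rfl⟩, rfl⟩))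
    · simpa [hal] using EReal.coe_lt_coe_iff.2 hly
    · simpa [hal] using hl z
  have h𝓕 : ∀ f ∈ 𝓕, LowerSemicontinuous f := by
    rintro _ ⟨-, a, c, rfl⟩
    exact (continuous_coe_real_ereal.comp (by fun_prop)).lowerSemicontinuous
  obtain ⟨𝓕', h𝓕'𝓕, hcount, hlub'⟩ := exists_countable_lowerSemicontinuous_isLUB h𝓕 hlub
  have hne : 𝓕'.Nonempty := by
    refine Set.nonempty_iff_ne_empty.2 fun h => ?_
    have hbot : Φ ≤ ⊥ := isLUB_empty_iff.1 (h ▸ hlub') ⊥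
    simpa [h₀] using hbot y₀
  obtain ⟨f, rfl⟩ := hcount.exists_eq_range hne
  choose a c hac using fun k => (h𝓕'𝓕 ⟨k, rfl⟩).2
  refine ⟨a, c, fun k z => by simpa [hac] using (h𝓕'𝓕 ⟨k, rfl⟩).1 z, fun z => ?_⟩
  refine IsLUB.iSup_eq ?_
  convert isLUB_pi.1 hlub' z
  ext e; simp [hac]

section MonotoneConvergence

variable {X : Type*} [MeasurableSpace X] {μ : Measure X} {f : ℕ → X → ℝ} {L : ℝ}

lemma lintegral_iSup_ofReal_sub_le (hf : ∀ K, Integrable (f K) μ)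
    (hmono : ∀ x, Monotone (f · x)) (hL : ∀ K, ∫ x, f K x ∂μ ≤ L) :
    ∫⁻ x, ⨆ K, ENNReal.ofReal (f K x - f 0 x) ∂μ ≤ ENNReal.ofReal (L - ∫ x, f 0 x ∂μ) := by
  have hmeas : ∀ K, AEMeasurable (fun x => ENNReal.ofReal (f K x - f 0 x)) μ :=
    fun K => ((hf K).sub (hf 0)).aemeasurable.ennreal_ofReal
  rw [lintegral_iSup' hmeas
    (ae_of_all _ fun x K K' h => ENNReal.ofReal_le_ofReal (by linarith [hmono x h]))]
  refine iSup_le fun K => ?_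
  have hsub : Integrable (fun x => f K x - f 0 x) μ := (hf K).sub (hf 0)
  rw [← ofReal_integral_eq_lintegral_ofReal hsub
    (ae_of_all _ fun x => sub_nonneg.2 (hmono x (Nat.zero_le K))), integral_sub (hf K) (hf 0)]
  exact ENNReal.ofReal_le_ofReal (by linarith [hL K])

theorem integrable_iSup_of_monotone (hf : ∀ K, Integrable (f K) μ)
    (hmono : ∀ x, Monotone (f · x)) (hL : ∀ K, ∫ x, f K x ∂μ ≤ L) :
    (∀ᵐ x ∂μ, BddAbove (Set.range (f · x))) ∧ Integrable (fun x => ⨆ K, f K x) μ ∧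
      ∫ x, ⨆ K, f K x ∂μ ≤ L := by
  set G := fun x => ⨆ K, ENNReal.ofReal (f K x - f 0 x)
  have hG := lintegral_iSup_ofReal_sub_le hf hmono hL
  have hGfin : ∀ᵐ x ∂μ, G x < ⊤ :=
    ae_lt_top' (AEMeasurable.iSup fun K => ((hf K).sub (hf 0)).aemeasurable.ennreal_ofReal)
      (hG.trans_lt ENNReal.ofReal_lt_top).ne
  have hbdd : ∀ᵐ x ∂μ, BddAbove (Set.range (f · x)) := by
    filter_upwards [hGfin] with x hx
    refine ⟨f 0 x + (G x).toReal, Set.forall_mem_range.2 fun K => ?_⟩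
    have := (ENNReal.ofReal_le_iff_le_toReal hx.ne).1
      (le_iSup (fun K => ENNReal.ofReal (f K x - f 0 x)) K)
    linarith
  have htend : ∀ᵐ x ∂μ, Tendsto (f · x) atTop (nhds (⨆ K, f K x)) := by
    filter_upwards [hbdd] with x hx using tendsto_atTop_ciSup (hmono x) hx
  have hsub : Integrable (fun x => (⨆ K, f K x) - f 0 x) μ := by
    have hnonneg : 0 ≤ᵐ[μ] fun x => (⨆ K, f K x) - f 0 x := by
      filter_upwards [hbdd] with x hx using sub_nonneg.2 (le_ciSup hx 0)
    refine ⟨(aestronglyMeasurable_of_tendsto_ae _ (fun K => (hf K).1) htend).sub (hf 0).1,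
      (hasFiniteIntegral_iff_ofReal hnonneg).2 ?_⟩
    refine lt_of_eq_of_lt (lintegral_congr_ae ?_) (hG.trans_lt ENNReal.ofReal_lt_top)
    filter_upwards [htend] with x hx
    refine (iSup_eq_of_tendsto (fun K K' h => ?_) ?_).symm
    · exact ENNReal.ofReal_le_ofReal (by linarith [hmono x h])
    · exact (ENNReal.continuous_ofReal.tendsto _).comp (hx.sub_const _)
  have hint : Integrable (fun x => ⨆ K, f K x) μ :=
    (hsub.add (hf 0)).congr (ae_of_all _ fun x => sub_add_cancel _ _)
  exact ⟨hbdd, hint,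
    le_of_tendsto' (integral_tendsto_of_tendsto_of_monotone hf hint (ae_of_all _ hmono) htend) hL⟩

end MonotoneConvergence

section MeasurableArgmax

variable {α : Type*} [MeasurableSpace α] {ℓ : ℕ → α → ℝ}

lemma measurable_apply_index (hℓ : ∀ k, Measurable (ℓ k)) {σ : α → ℕ} (hσ : Measurable σ) :
    Measurable fun y => ℓ (σ y) y :=
  (measurable_from_prod_countable_left (f := fun p : α × ℕ => ℓ p.2 p.1) fun k => hℓ k).comp
    (measurable_id.prodMk hσ)

lemma exists_measurable_argmax (hℓ : ∀ k, Measurable (ℓ k)) (K : ℕ) :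
    ∃ σ : α → ℕ, Measurable σ ∧ ∀ y, σ y ≤ K ∧ ∀ k ≤ K, ℓ k y ≤ ℓ (σ y) y := by
  induction K with
  | zero => exact ⟨fun _ => 0, measurable_const, fun y => ⟨le_rfl, fun k hk => by simp_all⟩⟩
  | succ K ih =>
    obtain ⟨σ, hσ, hσK⟩ := ih
    classical
    set S := {y | ℓ (σ y) y < ℓ (K + 1) y}
    refine ⟨S.piecewise (fun _ => K + 1) σ,
      measurable_const.piecewise (measurableSet_lt (measurable_apply_index hℓ hσ) (hℓ _)) hσ,
      fun y => ?_⟩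
    by_cases hy : y ∈ S
    · simp only [Set.piecewise_eq_of_mem _ _ _ hy, le_rfl, true_and]
      intro k hk
      rcases Nat.le_succ_iff.1 hk with hk | rfl
      · exact ((hσK y).2 k hk).trans hy.le
      · exact le_rfl
    · simp only [Set.piecewise_eq_of_notMem _ _ _ hy]
      refine ⟨(hσK y).1.trans K.le_succ, fun k hk => ?_⟩
      rcases Nat.le_succ_iff.1 hk with hk | rfl
      · exact (hσK y).2 k hk
      · exact not_lt.1 hy

end MeasurableArgmax

section WeakLowerSemicontinuity

open scoped InnerProductSpace

variable {X E : Type*} [MeasurableSpace X] {μ : Measure X}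
  [NormedAddCommGroup E] [InnerProductSpace ℝ E] [MeasurableSpace E] [BorelSpace E]

def TendstoWeaklyInL1 (μ : Measure X) (v : ℕ → X → E) (vlim : X → E) : Prop :=
  ∀ g : X → E, Measurable g → (∃ C, ∀ x, ‖g x‖ ≤ C) →
    Tendsto (fun n => ∫ x, ⟪v n x, g x⟫_ℝ ∂μ) atTop (𝓝 (∫ x, ⟪vlim x, g x⟫_ℝ ∂μ))

omit [MeasurableSpace E] [BorelSpace E] in
lemma MeasureTheory.Integrable.inner_of_bounded {u g : X → E} (hu : Integrable u μ)
    (hg : AEStronglyMeasurable g μ) {C : ℝ} (hC : ∀ x, ‖g x‖ ≤ C) :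
    Integrable (fun x => ⟪u x, g x⟫_ℝ) μ :=
  (hu.norm.mul_const C).mono' (hu.1.inner hg) <| ae_of_all _ fun x =>
    (norm_inner_le_norm _ _).trans (mul_le_mul_of_nonneg_left (hC x) (norm_nonneg _))

omit [MeasurableSpace X] in
lemma exists_norm_comp_le {β : Type*} [SeminormedAddCommGroup β] (u : ℕ → β) {σ : X → ℕ}
    {K : ℕ} (hσ : ∀ x, σ x ≤ K) : ∃ C, ∀ x, ‖u (σ x)‖ ≤ C :=
  ⟨∑ k ∈ Finset.range (K + 1), ‖u k‖, fun x => Finset.single_le_sum (fun _ _ => norm_nonneg _)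
    (Finset.mem_range_succ_iff.2 (hσ x))⟩

variable [SecondCountableTopology E] [IsFiniteMeasure μ] {Φ : E → EReal} {v : ℕ → X → E}
  {vlim : X → E} {φ : ℕ → X → ℝ}

lemma integral_inner_add_le_liminf (hv : TendstoWeaklyInL1 μ v vlim)
    (hvint : ∀ n, Integrable (v n) μ) (hvlimint : Integrable vlim μ)
    (hφ : ∀ n, ∀ᵐ x ∂μ, (φ n x : EReal) = Φ (v n x)) (hφint : ∀ n, Integrable (φ n) μ)
    (hφbdd : IsBoundedUnder (· ≤ ·) atTop fun n => ∫ x, φ n x ∂μ)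
    {g : X → E} {b : X → ℝ} (hg : Measurable g) {C : ℝ} (hgC : ∀ x, ‖g x‖ ≤ C)
    (hb : Measurable b) {C' : ℝ} (hbC : ∀ x, ‖b x‖ ≤ C')
    (hmin : ∀ x z, ((⟪g x, z⟫_ℝ + b x : ℝ) : EReal) ≤ Φ z) :
    Integrable (fun x => ⟪vlim x, g x⟫_ℝ + b x) μ ∧
      ∫ x, ⟪vlim x, g x⟫_ℝ + b x ∂μ ≤ liminf (fun n => ∫ x, φ n x ∂μ) atTop := by
  have hinner : ∀ u : X → E, Integrable u μ → Integrable (fun x => ⟪u x, g x⟫_ℝ) μ :=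
    fun u hu => hu.inner_of_bounded hg.aestronglyMeasurable hgC
  have hbint : Integrable b μ := .of_bound hb.aestronglyMeasurable C' (ae_of_all _ hbC)
  have hle : ∀ n, ∫ x, ⟪v n x, g x⟫_ℝ ∂μ + ∫ x, b x ∂μ ≤ ∫ x, φ n x ∂μ := fun n => by
    rw [← integral_add (hinner _ (hvint n)) hbint]
    refine integral_mono_ae ((hinner _ (hvint n)).add hbint) (hφint n) ?_
    filter_upwards [hφ n] with x hx
    have := hmin x (v n x)
    rw [← hx, real_inner_comm] at this
    exact_mod_cast this
  have htend := (hv g hg ⟨C, hgC⟩).add_const (∫ x, b x ∂μ)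
  refine ⟨(hinner _ hvlimint).add hbint, ?_⟩
  rw [integral_add (hinner _ hvlimint) hbint, ← htend.liminf_eq]
  exact liminf_le_liminf (Eventually.of_forall hle) htend.isBoundedUnder_ge
    hφbdd.isCoboundedUnder_ge

lemma iSup_comp_eq_iSup_of_le {β : Type*} [CompleteLattice β] {u : ℕ → β} {σ : ℕ → ℕ}
    (h : ∀ K, u K ≤ u (σ K)) : ⨆ K, u (σ K) = ⨆ k, u k :=
  le_antisymm (iSup_le fun K => le_iSup u (σ K)) (iSup_le fun K => (h K).trans (le_iSup (u ∘ σ) K))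

theorem integral_comp_le_liminf_of_tendstoWeaklyInL1 [CompleteSpace E]
    (hlsc : LowerSemicontinuous Φ)
    (hconv : ∀ y z : E, ∀ a c : ℝ, 0 ≤ a → 0 ≤ c →
      a + c = 1 → Φ (a • y + c • z) ≤ (a : EReal) * Φ y + (c : EReal) * Φ z)
    (hv : TendstoWeaklyInL1 μ v vlim) (hvint : ∀ n, Integrable (v n) μ)
    (hvlimint : Integrable vlim μ) (hφ : ∀ n, ∀ᵐ x ∂μ, (φ n x : EReal) = Φ (v n x))
    (hφint : ∀ n, Integrable (φ n) μ)
    (hφbdd : IsBoundedUnder (· ≤ ·) atTop fun n => ∫ x, φ n x ∂μ) :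
    (∀ᵐ x ∂μ, Φ (vlim x) ≠ ⊤) ∧ Integrable (fun x => (Φ (vlim x)).toReal) μ ∧
      ∫ x, (Φ (vlim x)).toReal ∂μ ≤ liminf (fun n => ∫ x, φ n x ∂μ) atTop := by
  rcases eq_zero_or_neZero μ with rfl | hμ
  · simp
  obtain ⟨x₀, hx₀⟩ := (hφ 0).exists
  obtain ⟨a, c, hmin, hsup⟩ := exists_seq_inner_add_minorant hlsc hconv hx₀.symm
  set w := hvlimint.1.mk vlim
  have hw : vlim =ᵐ[μ] w := hvlimint.1.ae_eq_mk
  have hℓ : ∀ k, Measurable fun x => ⟪a k, w x⟫_ℝ + c k := fun k =>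
    (measurable_const.inner hvlimint.1.measurable_mk).add_const _
  choose σ hσ hσK using exists_measurable_argmax hℓ
  set f : ℕ → X → ℝ := fun K x => ⟪a (σ K x), w x⟫_ℝ + c (σ K x)
  have hmono : ∀ x, Monotone (f · x) := fun x K K' h => (hσK K' x).2 _ ((hσK K x).1.trans h)
  have hf : ∀ K, Integrable (f K) μ ∧ ∫ x, f K x ∂μ ≤ liminf (fun n => ∫ x, φ n x ∂μ) atTop := by
    intro K
    obtain ⟨C, hC⟩ := exists_norm_comp_le a fun x => (hσK K x).1
    obtain ⟨C', hC'⟩ := exists_norm_comp_le c fun x => (hσK K x).1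
    have hae : (fun x => ⟪vlim x, a (σ K x)⟫_ℝ + c (σ K x)) =ᵐ[μ] f K := by
      filter_upwards [hw] with x hx
      simp [f, hx, real_inner_comm]
    obtain ⟨hint, hle⟩ := integral_inner_add_le_liminf hv hvint hvlimint hφ hφint hφbdd
      (measurable_from_nat.comp (hσ K)) hC (measurable_from_nat.comp (hσ K)) hC'
      fun x => hmin (σ K x)
    exact ⟨hint.congr hae, integral_congr_ae hae ▸ hle⟩
  obtain ⟨hbdd, hint, hle⟩ :=
    integrable_iSup_of_monotone (fun K => (hf K).1) hmono fun K => (hf K).2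
  have hΦ : ∀ᵐ x ∂μ, Φ (vlim x) = ↑(⨆ K, f K x) := by
    filter_upwards [hw, hbdd] with x hx hxb
    rw [hx, ← hsup, Monotone.map_ciSup_of_continuousAt continuous_coe_real_ereal.continuousAt
      EReal.coe_strictMono.monotone hxb]
    exact (iSup_comp_eq_iSup_of_le fun K => EReal.coe_le_coe_iff.2 ((hσK K x).2 K le_rfl)).symm
  have hΦ' : (fun x => ⨆ K, f K x) =ᵐ[μ] fun x => (Φ (vlim x)).toReal :=
    hΦ.mono fun x hx => by simp [hx]
  exact ⟨hΦ.mono fun x hx => hx ▸ EReal.coe_ne_top _, hint.congr hΦ', integral_congr_ae hΦ' ▸ hle⟩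

end WeakLowerSemicontinuity

open scoped InnerProductSpace in
lemma EuclideanSpace.sum_mul_eq_inner {M : ℕ} (u g : EuclideanSpace ℝ (Fin M)) :
    ∑ i, u i * g i = ⟪u, g⟫_ℝ := by
  simp [PiLp.inner_apply, mul_comm]

theorem stmt_10_general
    (d M : ℕ)
    (O : Set (Fin d → ℝ)) (hOfin : volume O < ⊤)
    (v : ℕ → (Fin d → ℝ) → EuclideanSpace ℝ (Fin M))
    (vlim : (Fin d → ℝ) → EuclideanSpace ℝ (Fin M))
    (hvint : ∀ n, IntegrableOn (v n) O volume)
    (hvlimint : IntegrableOn vlim O volume)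
    (hweak : ∀ g : (Fin d → ℝ) → EuclideanSpace ℝ (Fin M), Measurable g →
      (∃ Cg : ℝ, ∀ x, ‖g x‖ ≤ Cg) →
      Tendsto (fun n => ∫ x in O, ∑ i, v n x i * g x i) atTop
        (nhds (∫ x in O, ∑ i, vlim x i * g x i)))
    (Φ : EuclideanSpace ℝ (Fin M) → EReal)
    (hΦlsc : LowerSemicontinuous Φ)
    (hΦconv : ∀ y z : EuclideanSpace ℝ (Fin M), ∀ a c : ℝ, 0 ≤ a → 0 ≤ c →
      a + c = 1 → Φ (a • y + c • z) ≤ (a : EReal) * Φ y + (c : EReal) * Φ z)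
    (φ : ℕ → (Fin d → ℝ) → ℝ)
    (hφ : ∀ n, ∀ᵐ x ∂(volume.restrict O), (φ n x : EReal) = Φ (v n x))
    (hφint : ∀ n, IntegrableOn (φ n) O volume)
    (hφbdd : ∃ Cφ : ℝ, ∀ n, (∫ x in O, |φ n x|) ≤ Cφ) :
    (∀ᵐ x ∂(volume.restrict O), Φ (vlim x) ≠ ⊤) ∧
    IntegrableOn (fun x => (Φ (vlim x)).toReal) O volume ∧
    (∫ x in O, (Φ (vlim x)).toReal) ≤ liminf (fun n => ∫ x in O, φ n x) atTop := by
  have : IsFiniteMeasure (volume.restrict O) := isFiniteMeasure_restrict.2 hOfin.ne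
  obtain ⟨C, hC⟩ := hφbdd
  have hbdd : IsBoundedUnder (· ≤ ·) atTop fun n => ∫ x in O, φ n x :=
    ⟨C, eventually_map.2 <| Eventually.of_forall fun n =>
      (integral_mono (hφint n) (hφint n).abs fun x => le_abs_self _).trans (hC n)⟩
  exact integral_comp_le_liminf_of_tendstoWeaklyInL1 hΦlsc hΦconv
    (fun g hg hgC => by simpa only [EuclideanSpace.sum_mul_eq_inner] using hweak g hg hgC)
    hvint hvlimint hφ hφint hbdd

/-- Weak lower semicontinuity of convex integral
functionals: if `vₙ ⇀ v` weakly in `L¹(O; ℝ^M)` (`O ⊆ ℝ^d` measurable of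
finite measure), `Φ : ℝ^M → (−∞,∞]` is convex and lower semicontinuous, and
`Φ(vₙ)` is integrable (with representative `φₙ`) with bounded `L¹` norms,
then `Φ(v)` is integrable and `∫ Φ(v) ≤ liminf ∫ Φ(vₙ)`. -/
theorem stmt_10
    (d M : ℕ) (hd : 1 ≤ d) (hM : 1 ≤ M)
    (O : Set (Fin d → ℝ)) (hOmeas : MeasurableSet O) (hOfin : volume O < ⊤)
    (v : ℕ → (Fin d → ℝ) → EuclideanSpace ℝ (Fin M))
    (vlim : (Fin d → ℝ) → EuclideanSpace ℝ (Fin M))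
    (hvint : ∀ n, IntegrableOn (v n) O volume)
    (hvlimint : IntegrableOn vlim O volume)
    (hweak : ∀ g : (Fin d → ℝ) → EuclideanSpace ℝ (Fin M), Measurable g →
      (∃ Cg : ℝ, ∀ x, ‖g x‖ ≤ Cg) →
      Tendsto (fun n => ∫ x in O, ∑ i, v n x i * g x i) atTop
        (nhds (∫ x in O, ∑ i, vlim x i * g x i)))
    (Φ : EuclideanSpace ℝ (Fin M) → EReal)
    (hΦbot : ∀ y, Φ y ≠ ⊥)
    (hΦlsc : LowerSemicontinuous Φ)
    (hΦconv : ∀ y z : EuclideanSpace ℝ (Fin M), ∀ a c : ℝ, 0 ≤ a → 0 ≤ c →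
      a + c = 1 → Φ (a • y + c • z) ≤ (a : EReal) * Φ y + (c : EReal) * Φ z)
    (φ : ℕ → (Fin d → ℝ) → ℝ)
    (hφ : ∀ n, ∀ᵐ x ∂(volume.restrict O), (φ n x : EReal) = Φ (v n x))
    (hφint : ∀ n, IntegrableOn (φ n) O volume)
    (hφbdd : ∃ Cφ : ℝ, ∀ n, (∫ x in O, |φ n x|) ≤ Cφ) :
    (∀ᵐ x ∂(volume.restrict O), Φ (vlim x) ≠ ⊤) ∧
    IntegrableOn (fun x => (Φ (vlim x)).toReal) O volume ∧
    (∫ x in O, (Φ (vlim x)).toReal) ≤ liminf (fun n => ∫ x in O, φ n x) atTop :=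
  stmt_10_general d M O hOfin v vlim hvint hvlimint hweak Φ hΦlsc hΦconv φ hφ hφint hφbdd
end
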